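/- arXiv:1905.08380 — 3 statements merged into one kernel-verified Lean document; each statement's English description precedes it below -/
import Mathlib

section
/- Let u : ℝⁿ × ℝ → ℝᵐ be a C^{k} solution (k ≥ 1) of the linear system u_t + Σ_{i=1}^n A_i(x) ∂u/∂x_i + A_0(x) u = 0, let τ : ℝⁿ → ℝ be C^{k}, let g(x) := u(x, τ(x)), and suppose I − A(x) is invertible for every x. Define recursively g⁽⁰⁾ := g and g⁽ˡ⁺¹⁾(x) := −(I − A(x))⁻¹ (D g⁽ˡ⁾)(x). Then for every l with 0 ≤ l ≤ k and every x ∈ ℝⁿ, the l-th time derivative of u on the manifold Γ satisfies ∂ˡu/∂tˡ(x, τ(x)) = g⁽ˡ⁾(x); i.e., ∂ˡu/∂tˡ restricted to Γ equals (−(I − A)⁻¹ D)ˡ g. -/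
open Matrix

/-- The time derivative `∂w/∂t` of a function `w : ℝⁿ × ℝ → ℝᵐ`. -/
noncomputable def timeDeriv {n m : ℕ} (w : ((Fin n → ℝ) × ℝ) → (Fin m → ℝ)) :
    ((Fin n → ℝ) × ℝ) → (Fin m → ℝ) :=
  fun p => fderiv ℝ w p (0, 1)

/-- The first-order differential operator
`(D v)(x) = ∑ᵢ Aᵢ(x) ∂v/∂xᵢ(x) + A₀(x) v x` acting on functions of `x`. -/
noncomputable def Dop {n m : ℕ}
    (A0 : (Fin n → ℝ) → Matrix (Fin m) (Fin m) ℝ)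
    (A : Fin n → (Fin n → ℝ) → Matrix (Fin m) (Fin m) ℝ)
    (v : (Fin n → ℝ) → (Fin m → ℝ)) : (Fin n → ℝ) → (Fin m → ℝ) :=
  fun x => (∑ i, A i x *ᵥ fderiv ℝ v x (Pi.single i 1)) + A0 x *ᵥ v x

attribute [local instance] Matrix.normedAddCommGroup Matrix.normedSpace

noncomputable def mvB (m : ℕ) : Matrix (Fin m) (Fin m) ℝ →L[ℝ] (Fin m → ℝ) →L[ℝ] (Fin m → ℝ) :=
  LinearMap.toContinuousLinearMap <|
  { toFun := fun M => LinearMap.toContinuousLinearMap M.mulVecLin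
    map_add' := by intro M N; ext v i; simp [Matrix.add_mulVec]
    map_smul' := by intro c M; ext v i; simp [Matrix.smul_mulVec] }

@[simp] lemma mvB_apply {m : ℕ} (M : Matrix (Fin m) (Fin m) ℝ) (v : Fin m → ℝ) :
    mvB m M v = M *ᵥ v := rfl

lemma sum_mulVec' {ι : Type*} {m : ℕ} (s : Finset ι) (M : ι → Matrix (Fin m) (Fin m) ℝ)
    (v : Fin m → ℝ) : (∑ i ∈ s, M i) *ᵥ v = ∑ i ∈ s, M i *ᵥ v := by
  ext a
  simp only [Matrix.mulVec, dotProduct, Matrix.sum_apply, Finset.sum_mul, Finset.sum_apply]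
  rw [Finset.sum_comm]

section helpers

variable {E : Type*} [NormedAddCommGroup E] [NormedSpace ℝ E] {m : ℕ}

lemma differentiableAt_mulVec {M : E → Matrix (Fin m) (Fin m) ℝ} {v : E → Fin m → ℝ} {p : E}
    (hM : DifferentiableAt ℝ M p) (hv : DifferentiableAt ℝ v p) :
    DifferentiableAt ℝ (fun q => M q *ᵥ v q) p := by
  exact ((mvB m).isBoundedBilinearMap.differentiableAt (M p, v p)).comp p (hM.prodMk hv)

lemma fderiv_mulVec {M : E → Matrix (Fin m) (Fin m) ℝ} {v : E → Fin m → ℝ} {p : E}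
    (hM : DifferentiableAt ℝ M p) (hv : DifferentiableAt ℝ v p) (d : E) :
    fderiv ℝ (fun q => M q *ᵥ v q) p d
      = M p *ᵥ (fderiv ℝ v p d) + (fderiv ℝ M p d) *ᵥ v p := by
  have h := (mvB m).fderiv_of_bilinear (f := M) (g := v) (x := p) hM hv
  have e : fderiv ℝ (fun q => M q *ᵥ v q) p = fderiv ℝ (fun q => mvB m (M q) (v q)) p := rfl
  rw [e, show fderiv ℝ (fun q => mvB m (M q) (v q)) p = _ from h]
  simp [ContinuousLinearMap.precompR, ContinuousLinearMap.precompL]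
  rfl

variable {F : Type*} [NormedAddCommGroup F] [NormedSpace ℝ F]

lemma differentiableAt_fderiv_apply {f : E → F} {p : E} (hf : ContDiff ℝ 2 f) (w : E) :
    DifferentiableAt ℝ (fun q => fderiv ℝ f q w) p := by
  have hfd : DifferentiableAt ℝ (fderiv ℝ f) p :=
    ((hf.fderiv_right (m := 1) (by norm_num)).differentiable (by norm_num)).differentiableAt
  exact ((ContinuousLinearMap.apply ℝ F w).differentiableAt).comp p hfd

lemma fderiv_fderiv_apply {f : E → F} {p : E} (hf : ContDiff ℝ 2 f) (v w : E) :
    fderiv ℝ (fun q => fderiv ℝ f q w) p v = fderiv ℝ (fderiv ℝ f) p v w := by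
  have hfd : DifferentiableAt ℝ (fderiv ℝ f) p :=
    ((hf.fderiv_right (m := 1) (by norm_num)).differentiable (by norm_num)).differentiableAt
  have h := ((ContinuousLinearMap.apply ℝ F w).hasFDerivAt.comp p hfd.hasFDerivAt).fderiv
  have e : (fun q => fderiv ℝ f q w) = (⇑(ContinuousLinearMap.apply ℝ F w) ∘ fderiv ℝ f) := rfl
  rw [e, h]
  rfl

lemma fderiv_comm {f : E → F} {p : E} (hf : ContDiff ℝ 2 f) (v w : E) :
    fderiv ℝ (fun q => fderiv ℝ f q w) p v = fderiv ℝ (fun q => fderiv ℝ f q v) p w := by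
  rw [fderiv_fderiv_apply hf v w, fderiv_fderiv_apply hf w v]
  exact (hf.contDiffAt.isSymmSndFDerivAt (by norm_num)) v w

end helpers

lemma contDiff_timeDeriv {n m : ℕ} {w : ((Fin n → ℝ) × ℝ) → (Fin m → ℝ)} {j : ℕ}
    (hw : ContDiff ℝ ((j + 1 : ℕ) : ℕ∞) w) : ContDiff ℝ ((j : ℕ) : ℕ∞) (timeDeriv w) := by
  have h1 : ContDiff ℝ ((j : ℕ) : ℕ∞) (fderiv ℝ w) :=
    hw.fderiv_right (by push_cast; norm_num)
  exact (ContinuousLinearMap.apply ℝ (Fin m → ℝ) ((0 : Fin n → ℝ), (1 : ℝ))).contDiff.comp h1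

lemma fderiv_comp_graph {n m : ℕ} {w : ((Fin n → ℝ) × ℝ) → (Fin m → ℝ)} {τ : (Fin n → ℝ) → ℝ}
    (hw : Differentiable ℝ w) (hτ : Differentiable ℝ τ) (x y : Fin n → ℝ) :
    fderiv ℝ (fun x => w (x, τ x)) x y
      = fderiv ℝ w (x, τ x) (y, 0) + (fderiv ℝ τ x y) • fderiv ℝ w (x, τ x) (0, 1) := by
  have h1 : HasFDerivAt (fun x : Fin n → ℝ => (x, τ x))
      ((ContinuousLinearMap.id ℝ (Fin n → ℝ)).prod (fderiv ℝ τ x)) x :=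
    (hasFDerivAt_id x).prodMk (hτ x).hasFDerivAt
  have h2 := ((hw (x, τ x)).hasFDerivAt.comp x h1).fderiv
  have e0 : (fun x => w (x, τ x)) = (w ∘ fun x : Fin n → ℝ => (x, τ x)) := rfl
  rw [e0, h2]
  have e : ((y, fderiv ℝ τ x y) : (Fin n → ℝ) × ℝ)
      = ((y, 0) : (Fin n → ℝ) × ℝ) + (fderiv ℝ τ x y) • ((0 : Fin n → ℝ), (1 : ℝ)) := by
    simp [Prod.ext_iff]
  show fderiv ℝ w (x, τ x) (y, fderiv ℝ τ x y) = _
  rw [e, map_add, (fderiv ℝ w (x, τ x)).map_smul]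

lemma cast_le_cast' {a b : ℕ} (h : a ≤ b) :
    ((a : ℕ∞) : WithTop ℕ∞) ≤ ((b : ℕ∞) : WithTop ℕ∞) := by
  rw [show ((a : ℕ∞) : WithTop ℕ∞) = ((a : ℕ) : WithTop ℕ∞) from rfl,
      show ((b : ℕ∞) : WithTop ℕ∞) = ((b : ℕ) : WithTop ℕ∞) from rfl]
  exact_mod_cast h

lemma two_le_cast' {a : ℕ} (h : 2 ≤ a) : (2 : WithTop ℕ∞) ≤ ((a : ℕ∞) : WithTop ℕ∞) := by
  simpa using cast_le_cast' h

lemma one_le_cast' {a : ℕ} (h : 1 ≤ a) : (1 : WithTop ℕ∞) ≤ ((a : ℕ∞) : WithTop ℕ∞) := by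
  simpa using cast_le_cast' h

section pde
variable {n m : ℕ}

lemma pde_prop (k : ℕ)
    (A0 : (Fin n → ℝ) → Matrix (Fin m) (Fin m) ℝ)
    (A : Fin n → (Fin n → ℝ) → Matrix (Fin m) (Fin m) ℝ)
    (hA0 : ∀ a b, ContDiff ℝ (⊤ : ℕ∞) fun x => A0 x a b)
    (hA : ∀ i a b, ContDiff ℝ (⊤ : ℕ∞) fun x => A i x a b)
    (u : ((Fin n → ℝ) × ℝ) → (Fin m → ℝ)) (hu : ContDiff ℝ (k : ℕ∞) u)
    (hsol : ∀ (x : Fin n → ℝ) (t : ℝ),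
      fderiv ℝ u (x, t) (0, 1)
        + ∑ i, A i x *ᵥ fderiv ℝ u (x, t) (Pi.single i 1, 0)
        + A0 x *ᵥ u (x, t) = 0) :
    ∀ l, l + 1 ≤ k → ∀ p : (Fin n → ℝ) × ℝ,
      fderiv ℝ (timeDeriv^[l] u) p (0, 1)
        + ∑ i, A i p.1 *ᵥ fderiv ℝ (timeDeriv^[l] u) p (Pi.single i 1, 0)
        + A0 p.1 *ᵥ (timeDeriv^[l] u) p = 0 := by
  have hW : ∀ l, l ≤ k → ContDiff ℝ ((k - l : ℕ) : ℕ∞) (timeDeriv^[l] u) := by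
    intro l
    induction l with
    | zero => intro _; simpa using hu
    | succ l ih =>
      intro hl
      rw [Function.iterate_succ_apply']
      have h := ih (by omega)
      rw [show k - l = (k - (l + 1)) + 1 from by omega] at h
      exact contDiff_timeDeriv h
  intro l
  induction l with
  | zero => intro _ p; simpa using hsol p.1 p.2
  | succ l ih =>
    intro hl p
    have hPDEl := ih (by omega)
    have hf2 : ContDiff ℝ 2 (timeDeriv^[l] u) := by
      have h := hW l (by omega)
      exact h.of_le (two_le_cast' (by omega))
    set f := timeDeriv^[l] u with hfdef
    have hAc : ∀ i, ContDiff ℝ (⊤ : ℕ∞) (fun q : (Fin n → ℝ) × ℝ => A i q.1) := fun i =>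
      (contDiff_pi.2 fun a => contDiff_pi.2 fun b => hA i a b).comp contDiff_fst
    have hA0c : ContDiff ℝ (⊤ : ℕ∞) (fun q : (Fin n → ℝ) × ℝ => A0 q.1) :=
      (contDiff_pi.2 fun a => contDiff_pi.2 fun b => hA0 a b).comp contDiff_fst
    have hAd : ∀ (B : (Fin n → ℝ) → Matrix (Fin m) (Fin m) ℝ), ContDiff ℝ (⊤ : ℕ∞) B →
        fderiv ℝ (fun q : (Fin n → ℝ) × ℝ => B q.1) p ((0 : Fin n → ℝ), (1 : ℝ)) = 0 := by
      intro B hB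
      have h1 : HasFDerivAt (fun q : (Fin n → ℝ) × ℝ => B q.1)
          ((fderiv ℝ B p.1).comp (ContinuousLinearMap.fst ℝ (Fin n → ℝ) ℝ)) p :=
        ((hB.differentiable (by simp) p.1).hasFDerivAt.comp p hasFDerivAt_fst)
      rw [h1.fderiv]
      simp
    -- timeDeriv f equals the negative of the spatial part
    have hTf : timeDeriv f = fun q =>
        -((∑ i, A i q.1 *ᵥ fderiv ℝ f q (Pi.single i 1, 0)) + A0 q.1 *ᵥ f q) := by
      funext q
      have h' : fderiv ℝ f q (0, 1)
          + ((∑ i, A i q.1 *ᵥ fderiv ℝ f q (Pi.single i 1, 0)) + A0 q.1 *ᵥ f q) = 0 := by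
        rw [← add_assoc]; exact hPDEl q
      exact eq_neg_of_add_eq_zero_left h'
    have hdf : ∀ (d : (Fin n → ℝ) × ℝ), DifferentiableAt ℝ (fun q => fderiv ℝ f q d) p :=
      fun d => differentiableAt_fderiv_apply hf2 d
    have hdterm : ∀ i, DifferentiableAt ℝ
        (fun q : (Fin n → ℝ) × ℝ => A i q.1 *ᵥ fderiv ℝ f q (Pi.single i 1, 0)) p := fun i =>
      differentiableAt_mulVec (((hAc i).differentiable (by simp)).differentiableAt) (hdf _)
    have hdsum : DifferentiableAt ℝ
        (fun q : (Fin n → ℝ) × ℝ => ∑ i, A i q.1 *ᵥ fderiv ℝ f q (Pi.single i 1, 0)) p := by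
      apply DifferentiableAt.fun_sum
      exact fun i _ => hdterm i
    have hdA0 : DifferentiableAt ℝ (fun q : (Fin n → ℝ) × ℝ => A0 q.1 *ᵥ f q) p :=
      differentiableAt_mulVec ((hA0c.differentiable (by simp)).differentiableAt)
        ((hf2.differentiable (by norm_num)).differentiableAt)
    have main : fderiv ℝ (timeDeriv f) p (0, 1)
        = -((∑ i, A i p.1 *ᵥ fderiv ℝ (timeDeriv f) p (Pi.single i 1, 0))
            + A0 p.1 *ᵥ timeDeriv f p) := by
      conv_lhs => rw [hTf]
      rw [fderiv_fun_neg]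
      simp only [ContinuousLinearMap.neg_apply]
      congr 1
      rw [fderiv_fun_add hdsum hdA0]
      simp only [ContinuousLinearMap.add_apply]
      congr 1
      · rw [fderiv_fun_sum (fun i _ => hdterm i)]
        simp only [ContinuousLinearMap.sum_apply]
        refine Finset.sum_congr rfl fun i _ => ?_
        rw [fderiv_mulVec (((hAc i).differentiable (by simp)).differentiableAt) (hdf _)]
        rw [hAd (A i) (contDiff_pi.2 fun a => contDiff_pi.2 fun b => hA i a b)]
        rw [fderiv_comm hf2]
        simp only [Matrix.zero_mulVec, add_zero]
        rfl
      · rw [fderiv_mulVec ((hA0c.differentiable (by simp)).differentiableAt)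
            ((hf2.differentiable (by norm_num)).differentiableAt)]
        rw [hAd A0 (contDiff_pi.2 fun a => contDiff_pi.2 fun b => hA0 a b)]
        simp only [Matrix.zero_mulVec, add_zero]
        rfl
    rw [Function.iterate_succ_apply']
    rw [show timeDeriv^[l] u = f from rfl]
    rw [main]
    abel
end pde

/-- Let `u` be a `C^k` solution (`k ≥ 1`) of
`u_t + ∑ᵢ Aᵢ(x) u_{xᵢ} + A₀(x) u = 0`, let `τ` be `C^k`, `g x = u (x, τ x)`, and
suppose `I - A(x)` is invertible for every `x`, where `A(x) = ∑ᵢ ∂τ/∂xᵢ(x) • Aᵢ(x)`.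
Then for every `0 ≤ l ≤ k` and every `x`, the `l`-th time derivative of `u` on the
manifold `Γ = {(x, τ x)}` equals the `l`-th iterate `(-(I - A)⁻¹ D)^l g` at `x`. -/
theorem iterated_time_deriv_on_manifold
    {n m : ℕ} (k : ℕ) (hk : 1 ≤ k)
    (A0 : (Fin n → ℝ) → Matrix (Fin m) (Fin m) ℝ)
    (A : Fin n → (Fin n → ℝ) → Matrix (Fin m) (Fin m) ℝ)
    (hA0 : ∀ a b, ContDiff ℝ (⊤ : ℕ∞) fun x => A0 x a b)
    (hA : ∀ i a b, ContDiff ℝ (⊤ : ℕ∞) fun x => A i x a b)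
    (u : ((Fin n → ℝ) × ℝ) → (Fin m → ℝ)) (hu : ContDiff ℝ (k : ℕ∞) u)
    (τ : (Fin n → ℝ) → ℝ) (hτ : ContDiff ℝ (k : ℕ∞) τ)
    (hsol : ∀ (x : Fin n → ℝ) (t : ℝ),
      fderiv ℝ u (x, t) (0, 1)
        + ∑ i, A i x *ᵥ fderiv ℝ u (x, t) (Pi.single i 1, 0)
        + A0 x *ᵥ u (x, t) = 0)
    (g : (Fin n → ℝ) → (Fin m → ℝ)) (hg : ∀ x, g x = u (x, τ x))
    (hinv : ∀ x : Fin n → ℝ,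
      IsUnit ((1 : Matrix (Fin m) (Fin m) ℝ)
        - ∑ i, fderiv ℝ τ x (Pi.single i 1) • A i x)) :
    ∀ l : ℕ, l ≤ k → ∀ x : Fin n → ℝ,
      (timeDeriv^[l] u) (x, τ x)
        = ((fun (v : (Fin n → ℝ) → (Fin m → ℝ)) x =>
              -(((1 : Matrix (Fin m) (Fin m) ℝ)
                  - ∑ i, fderiv ℝ τ x (Pi.single i 1) • A i x)⁻¹ *ᵥ
                Dop A0 A v x))^[l] g) x := by
  have hW : ∀ l, l ≤ k → ContDiff ℝ ((k - l : ℕ) : ℕ∞) (timeDeriv^[l] u) := by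
    intro l
    induction l with
    | zero => intro _; simpa using hu
    | succ l ih =>
      intro hl
      rw [Function.iterate_succ_apply']
      have h := ih (by omega)
      rw [show k - l = (k - (l + 1)) + 1 from by omega] at h
      exact contDiff_timeDeriv h
  have hτd : Differentiable ℝ τ := hτ.differentiable (by simp; omega)
  have hPDE := pde_prop k A0 A hA0 hA u hu hsol
  intro l
  induction l with
  | zero => intro _ x; simpa using (hg x).symm
  | succ l ih =>
    intro hl x
    have hl' : l ≤ k := by omega
    rw [Function.iterate_succ_apply', Function.iterate_succ_apply']
    set f := timeDeriv^[l] u with hfdef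
    have hGl : (fun x => f (x, τ x))
        = (fun (v : (Fin n → ℝ) → (Fin m → ℝ)) x =>
            -(((1 : Matrix (Fin m) (Fin m) ℝ)
                - ∑ i, fderiv ℝ τ x (Pi.single i 1) • A i x)⁻¹ *ᵥ
              Dop A0 A v x))^[l] g := funext fun x => ih hl' x
    have hfC1 : Differentiable ℝ f :=
      (hW l hl').differentiable
        (lt_of_lt_of_le zero_lt_one (one_le_cast' (a := k - l) (by omega))).ne'
    set T := fderiv ℝ f (x, τ x) ((0 : Fin n → ℝ), (1 : ℝ)) with hTdef
    have hchain : ∀ i, fderiv ℝ (fun x => f (x, τ x)) x (Pi.single i 1)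
        = fderiv ℝ f (x, τ x) (Pi.single i 1, 0)
          + (fderiv ℝ τ x (Pi.single i 1)) • T :=
      fun i => fderiv_comp_graph hfC1 hτd x _
    have hpde : T + ((∑ i, A i x *ᵥ fderiv ℝ f (x, τ x) (Pi.single i 1, 0))
        + A0 x *ᵥ f (x, τ x)) = 0 := by
      rw [← add_assoc]
      exact hPDE l (by omega) (x, τ x)
    have h1 : (∑ i, A i x *ᵥ fderiv ℝ f (x, τ x) (Pi.single i 1, 0))
        + A0 x *ᵥ f (x, τ x) = -T := eq_neg_of_add_eq_zero_right hpde
    have hDop : Dop A0 A (fun x => f (x, τ x)) x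
        = -(((1 : Matrix (Fin m) (Fin m) ℝ)
              - ∑ i, fderiv ℝ τ x (Pi.single i 1) • A i x) *ᵥ T) := by
      simp only [Dop]
      simp only [hchain, Matrix.mulVec_add, Matrix.mulVec_smul]
      rw [Finset.sum_add_distrib]
      have h2 : (∑ i, fderiv ℝ τ x (Pi.single i 1) • (A i x *ᵥ T))
          = (∑ i, fderiv ℝ τ x (Pi.single i 1) • A i x) *ᵥ T := by
        rw [sum_mulVec']
        exact Finset.sum_congr rfl fun i _ => (Matrix.smul_mulVec _ _ _).symm
      rw [h2, Matrix.sub_mulVec, Matrix.one_mulVec, neg_sub]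
      calc (∑ i, A i x *ᵥ fderiv ℝ f (x, τ x) (Pi.single i 1, 0))
            + (∑ i, fderiv ℝ τ x (Pi.single i 1) • A i x) *ᵥ T
            + A0 x *ᵥ f (x, τ x)
          = ((∑ i, A i x *ᵥ fderiv ℝ f (x, τ x) (Pi.single i 1, 0))
              + A0 x *ᵥ f (x, τ x))
            + (∑ i, fderiv ℝ τ x (Pi.single i 1) • A i x) *ᵥ T := by abel
        _ = -T + (∑ i, fderiv ℝ τ x (Pi.single i 1) • A i x) *ᵥ T := by rw [h1]
        _ = (∑ i, fderiv ℝ τ x (Pi.single i 1) • A i x) *ᵥ T - T := by abel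
    show fderiv ℝ f (x, τ x) ((0 : Fin n → ℝ), (1 : ℝ)) = _
    rw [← hGl, hDop, ← hTdef]
    rw [Matrix.mulVec_neg, neg_neg, Matrix.mulVec_mulVec,
        Matrix.nonsing_inv_mul _ ((Matrix.isUnit_iff_isUnit_det _).1 (hinv x)),
        Matrix.one_mulVec]
end

section
/- (Carrier–Greenspan linearization.) Let Ω ⊂ ℝ² be open, let η, u : Ω → ℝ be C¹ solutions of the shallow water system η_t + (1 + η_x)u + c(x + η)u_x = 0 and u_t + u u_x + η_x = 0 on Ω, where c : ℝ → ℝ is C¹. Suppose the hodograph map Φ(x, t) := (x + η(x,t), t − u(x,t)) is a C¹ diffeomorphism from Ω onto an open set Ω' ⊂ ℝ². Define φ, ψ : Ω' → ℝ by φ(σ, τ) = u(x, t) and ψ(σ, τ) = η(x, t) + u(x, t)²/2 whenever (σ, τ) = Φ(x, t). Then on Ω' the pair (φ, ψ) satisfies the linear hyperbolic system φ_τ + ψ_σ = 0 and ψ_τ + c(σ) φ_σ + φ = 0; equivalently, writing 𝛟 = (φ, ψ)ᵀ, A(σ) = [[0, 1], [c(σ), 0]], B = [[0, 0], [1, 0]],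 one has 𝛟_τ + A(σ) 𝛟_σ + B 𝛟 = 0. -/
/-!
Differentiating `φ ∘ Φ = u` and `ψ ∘ Φ = η + u² / 2` by the chain rule expresses `dφ ∘ DΦ` and
`dψ ∘ DΦ` through the derivatives of `η` and `u`. The shallow water equations say exactly that the
covector `(-φ_τ, -c(σ) φ_σ - φ)` pulls back under `DΦ` to `d(η + u² / 2)` as well; since `DΦ` has
the right inverse `DΨ`, that covector is `dψ`, which is the linear system.
-/

open Filter ContinuousLinearMap

section ChainRule

variable {𝕜 : Type*} [NontriviallyNormedField 𝕜]
  {E F G : Type*} [NormedAddCommGroup E] [NormedSpace 𝕜 E] [NormedAddCommGroup F] [NormedSpace 𝕜 F]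
  [NormedAddCommGroup G] [NormedSpace 𝕜 G]

theorem HasFDerivAt.comp_eq_of_eqOn {f : F → G} {g : E → F} {h : E → G}
    {M : F →L[𝕜] G} {L : E →L[𝕜] F} {N : E →L[𝕜] G} {s : Set E} {x : E} {y : F}
    (hf : HasFDerivAt f M y) (hg : HasFDerivAt g L x) (hgx : g x = y) (hh : HasFDerivAt h N x)
    (hs : IsOpen s) (hx : x ∈ s) (hfg : ∀ z ∈ s, f (g z) = h z) :
    M.comp L = N := by
  subst hgx
  exact (hf.comp x hg).unique (hh.congr_of_eventuallyEq (eventually_of_mem (hs.mem_nhds hx) hfg))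

theorem differentiableAt_of_comp_rightInverse_eq {Ω : Set E} {Ω' : Set F} {Φ : E → F} {Ψ : F → E}
    {f : F → G} {h : E → G} {q : F} (hΩ' : IsOpen Ω') (hq : q ∈ Ω')
    (hΨmaps : Set.MapsTo Ψ Ω' Ω) (hright : ∀ q ∈ Ω', Φ (Ψ q) = q)
    (hfh : ∀ p ∈ Ω, f (Φ p) = h p) (hh : DifferentiableAt 𝕜 h (Ψ q))
    (hΨ : DifferentiableAt 𝕜 Ψ q) : DifferentiableAt 𝕜 f q := by
  refine (hh.comp q hΨ).congr_of_eventuallyEq ?_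
  filter_upwards [hΩ'.mem_nhds hq] with q' hq'
  rw [Function.comp_apply, ← hfh _ (hΨmaps hq'), hright q' hq']

end ChainRule

theorem ContinuousLinearMap.eq_of_comp_eq_of_rightInverse {R M N P : Type*} [Semiring R]
    [TopologicalSpace M] [AddCommMonoid M] [Module R M] [TopologicalSpace N] [AddCommMonoid N]
    [Module R N] [TopologicalSpace P] [AddCommMonoid P] [Module R P]
    {T : M →L[R] N} {S : N →L[R] M} (hTS : T.comp S = .id R N) {m n : N →L[R] P}
    (h : m.comp T = n.comp T) : m = n := by
  rw [← m.comp_id, ← n.comp_id, ← hTS, ← comp_assoc, ← comp_assoc, h]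

theorem HasFDerivAt.add_sq_div_two {E : Type*} [NormedAddCommGroup E] [NormedSpace ℝ E]
    {η u : E → ℝ} {Dη Du : E →L[ℝ] ℝ} {p : E} (hη : HasFDerivAt η Dη p)
    (hu : HasFDerivAt u Du p) :
    HasFDerivAt (fun x => η x + u x ^ 2 / 2) (Dη + u p • Du) p := by
  simp_rw [div_eq_mul_inv]
  refine (hη.add ((hu.pow 2).mul_const (2⁻¹ : ℝ))).congr_fderiv ?_
  ext v
  simp only [add_apply, smul_apply, smul_eq_mul, nsmul_eq_mul, Nat.cast_ofNat]
  ring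

theorem hasFDerivAt_hodograph {η u : ℝ × ℝ → ℝ} {Dη Du : ℝ × ℝ →L[ℝ] ℝ} {p : ℝ × ℝ}
    (hη : HasFDerivAt η Dη p) (hu : HasFDerivAt u Du p) :
    HasFDerivAt (fun x : ℝ × ℝ => (x.1 + η x, x.2 - u x))
      ((fst ℝ ℝ ℝ + Dη).prod (snd ℝ ℝ ℝ - Du)) p :=
  (hasFDerivAt_fst.add hη).prodMk (hasFDerivAt_snd.sub hu)

theorem ContinuousLinearMap.apply_prod_eq_smul_add {R M : Type*} [Semiring R] [TopologicalSpace R]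
    [TopologicalSpace M] [AddCommMonoid M] [Module R M] (L : R × R →L[R] M) (x y : R) :
    L (x, y) = x • L (1, 0) + y • L (0, 1) := by
  rw [← map_smul, ← map_smul, ← map_add]
  simp

theorem shallowWater_pullback (c u : ℝ) (Dη Du ℓ : ℝ × ℝ →L[ℝ] ℝ)
    (hcont : Dη (0, 1) + (1 + Dη (1, 0)) * u + c * Du (1, 0) = 0)
    (hmom : Du (0, 1) + u * Du (1, 0) + Dη (1, 0) = 0)
    (hℓ : ℓ.comp ((fst ℝ ℝ ℝ + Dη).prod (snd ℝ ℝ ℝ - Du)) = Du) :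
    ((-ℓ (0, 1)) • fst ℝ ℝ ℝ - (c * ℓ (1, 0) + u) • snd ℝ ℝ ℝ).comp
      ((fst ℝ ℝ ℝ + Dη).prod (snd ℝ ℝ ℝ - Du)) = Dη + u • Du := by
  have hx := congr($hℓ (1, 0))
  have ht := congr($hℓ (0, 1))
  simp only [comp_apply, prod_apply, add_apply, sub_apply, coe_fst', coe_snd'] at hx ht
  rw [apply_prod_eq_smul_add, smul_eq_mul, smul_eq_mul] at hx ht
  ext
  all_goals simp only [comp_apply, inl_apply, inr_apply, prod_apply, add_apply, sub_apply, smul_apply,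
    coe_fst', coe_snd', smul_eq_mul]
  · linear_combination ℓ (1, 0) * hcont - (ℓ (0, 1) + 1) * hmom - u * hx - ht
  · linear_combination (-(ℓ (0, 1) + 1) - u * ℓ (1, 0)) * hcont
      + (c * ℓ (1, 0) + u * (ℓ (0, 1) + 1)) * hmom + (u ^ 2 - c) * hx + u * ht

theorem carrier_greenspan_linearization_general
    (Ω Ω' : Set (ℝ × ℝ)) (hΩ : IsOpen Ω) (hΩ' : IsOpen Ω')
    (c : ℝ → ℝ)
    (η u : ℝ × ℝ → ℝ)
    (hη : ContDiffOn ℝ 1 η Ω) (hu : ContDiffOn ℝ 1 u Ω)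
    (hcontinuity : ∀ p ∈ Ω,
      fderiv ℝ η p (0, 1) + (1 + fderiv ℝ η p (1, 0)) * u p
        + c (p.1 + η p) * fderiv ℝ u p (1, 0) = 0)
    (hmomentum : ∀ p ∈ Ω,
      fderiv ℝ u p (0, 1) + u p * fderiv ℝ u p (1, 0) + fderiv ℝ η p (1, 0) = 0)
    (Φ : ℝ × ℝ → ℝ × ℝ) (hΦ : ∀ p : ℝ × ℝ, Φ p = (p.1 + η p, p.2 - u p))
    (Ψ : ℝ × ℝ → ℝ × ℝ) (hΨ : ContDiffOn ℝ 1 Ψ Ω')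
    (hΨmaps : Set.MapsTo Ψ Ω' Ω)
    (hright : ∀ q ∈ Ω', Φ (Ψ q) = q)
    (φ ψ : ℝ × ℝ → ℝ)
    (hφ : ∀ p ∈ Ω, φ (Φ p) = u p)
    (hψ : ∀ p ∈ Ω, ψ (Φ p) = η p + (u p) ^ 2 / 2) :
    ∀ q ∈ Ω',
      fderiv ℝ φ q (0, 1) + fderiv ℝ ψ q (1, 0) = 0 ∧
      fderiv ℝ ψ q (0, 1) + c q.1 * fderiv ℝ φ q (1, 0) + φ q = 0 := by
  intro q hq
  set p := Ψ q
  have hp : p ∈ Ω := hΨmaps hq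
  have hpq : Φ p = q := hright q hq
  have hηp := ((hη.contDiffAt (hΩ.mem_nhds hp)).differentiableAt one_ne_zero).hasFDerivAt
  have hup := ((hu.contDiffAt (hΩ.mem_nhds hp)).differentiableAt one_ne_zero).hasFDerivAt
  have hΨq := ((hΨ.contDiffAt (hΩ'.mem_nhds hq)).differentiableAt one_ne_zero).hasFDerivAt
  have hT : HasFDerivAt Φ _ p := funext hΦ ▸ hasFDerivAt_hodograph hηp hup
  have hTS := hT.comp_eq_of_eqOn hΨq rfl (hasFDerivAt_id q) hΩ' hq hright
  have hφT := (differentiableAt_of_comp_rightInverse_eq hΩ' hq hΨmaps hright hφ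
    hup.differentiableAt hΨq.differentiableAt).hasFDerivAt.comp_eq_of_eqOn hT hpq hup hΩ hp hφ
  have hN := hηp.add_sq_div_two hup
  have hψT := (differentiableAt_of_comp_rightInverse_eq hΩ' hq hΨmaps hright hψ
    hN.differentiableAt hΨq.differentiableAt).hasFDerivAt.comp_eq_of_eqOn hT hpq hN hΩ hp hψ
  have hσ : q.1 = p.1 + η p := by rw [← hpq, hΦ]
  have hdψ : fderiv ℝ ψ q = (-fderiv ℝ φ q (0, 1)) • fst ℝ ℝ ℝ
      - (c q.1 * fderiv ℝ φ q (1, 0) + u p) • snd ℝ ℝ ℝ :=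
    eq_of_comp_eq_of_rightInverse hTS (hψT.trans (shallowWater_pullback _ _ _ _ _
      (hσ ▸ hcontinuity p hp) (hmomentum p hp) hφT).symm)
  have hφq : φ q = u p := hpq ▸ hφ p hp
  rw [hdψ, hφq]
  simp

/-- **Carrier–Greenspan linearization.**
Let `η, u : Ω → ℝ` be `C¹` solutions on an open set `Ω ⊆ ℝ²` of the shallow water system
`η_t + (1 + η_x) u + c (x + η) u_x = 0`, `u_t + u u_x + η_x = 0`.
Suppose the hodograph map `Φ (x, t) = (x + η (x,t), t - u (x,t))` is a `C¹` diffeomorphism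
of `Ω` onto an open set `Ω'` (with `C¹` inverse `Ψ`), and define `φ, ψ` on `Ω'` by
`φ (Φ p) = u p` and `ψ (Φ p) = η p + u p ^ 2 / 2`.  Then on `Ω'` the pair `(φ, ψ)`
satisfies the linear system `φ_τ + ψ_σ = 0`, `ψ_τ + c σ ⬝ φ_σ + φ = 0`. -/
theorem carrier_greenspan_linearization
    (Ω Ω' : Set (ℝ × ℝ)) (hΩ : IsOpen Ω) (hΩ' : IsOpen Ω')
    (c : ℝ → ℝ) (hc : ContDiff ℝ 1 c)
    (η u : ℝ × ℝ → ℝ)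
    (hη : ContDiffOn ℝ 1 η Ω) (hu : ContDiffOn ℝ 1 u Ω)
    (hcontinuity : ∀ p ∈ Ω,
      fderiv ℝ η p (0, 1) + (1 + fderiv ℝ η p (1, 0)) * u p
        + c (p.1 + η p) * fderiv ℝ u p (1, 0) = 0)
    (hmomentum : ∀ p ∈ Ω,
      fderiv ℝ u p (0, 1) + u p * fderiv ℝ u p (1, 0) + fderiv ℝ η p (1, 0) = 0)
    (Φ : ℝ × ℝ → ℝ × ℝ) (hΦ : ∀ p : ℝ × ℝ, Φ p = (p.1 + η p, p.2 - u p))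
    (Ψ : ℝ × ℝ → ℝ × ℝ) (hΨ : ContDiffOn ℝ 1 Ψ Ω')
    (hΦmaps : Set.MapsTo Φ Ω Ω') (hΨmaps : Set.MapsTo Ψ Ω' Ω)
    (hleft : ∀ p ∈ Ω, Ψ (Φ p) = p) (hright : ∀ q ∈ Ω', Φ (Ψ q) = q)
    (φ ψ : ℝ × ℝ → ℝ)
    (hφ : ∀ p ∈ Ω, φ (Φ p) = u p)
    (hψ : ∀ p ∈ Ω, ψ (Φ p) = η p + (u p) ^ 2 / 2) :
    ∀ q ∈ Ω',
      fderiv ℝ φ q (0, 1) + fderiv ℝ ψ q (1, 0) = 0 ∧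
      fderiv ℝ ψ q (0, 1) + c q.1 * fderiv ℝ φ q (1, 0) + φ q = 0 :=
  carrier_greenspan_linearization_general Ω Ω' hΩ hΩ' c η u hη hu hcontinuity hmomentum Φ hΦ Ψ hΨ
    hΨmaps hright φ ψ hφ hψ
end

section
/- (Data projection for the shallow water system.) Let c : ℝ → ℝ be C^{j+1}, let A(σ) = [[0, 1], [c(σ), 0]] and B = [[0, 0], [1, 0]], and let 𝛟 = (φ, ψ)ᵀ : ℝ × ℝ → ℝ² be a C^{j+1} solution of 𝛟_τ + A(σ) 𝛟_σ + B 𝛟 = 0. Let φ₀ : ℝ → ℝ be C^{j+1}, suppose c(σ) φ₀'(σ)² ≠ 1 for all σ, let 𝛟₀(σ) := 𝛟(σ, −φ₀(σ)) with first component equal to φ₀(σ), and define 𝛟_j(σ) := 𝛟₀(σ) + Σ_{k=1}^{j} ((−φ₀(σ))^k / k!) · ({ [I + φ₀'(σ)A(σ)]⁻¹ [A(σ) d/dσ + B] }ᵏ 𝛟₀)(σ). If ε > 0 and for every σ and every s between 0 and −φ₀(σ) one has (|φ₀(σ)|^{j+1}/(j+1)!) · ‖∂^{j+1}𝛟/∂τ^{j+1}(σ,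 s)‖ < ε, then ‖𝛟(σ, 0) − 𝛟_j(σ)‖ < ε for every σ. -/
/-
Restricted to the line τ ↦ (σ, τ), Taylor's formula at τ = -φ₀(σ) writes 𝛟(σ, 0) as the degree-`j`
Taylor polynomial in the τ-derivatives ∂ᵏ_τ𝛟(σ, -φ₀(σ)) plus a Lagrange remainder, which is
controlled by testing it against a norming functional. Since A and B depend on σ only and mixed
partials commute, every ∂ᵏ_τ𝛟 solves the same system. Differentiating ∂ᵏ_τ𝛟 along the curve
Γ = {(σ, -φ₀(σ))} and eliminating ∂_σ with the equation gives
`A (d/dσ) (∂ᵏ_τ𝛟|_Γ) + B ∂ᵏ_τ𝛟|_Γ = -(I + φ₀' A) ∂ᵏ⁺¹_τ𝛟|_Γ`, and `det (I + φ₀' A) = 1 - c φ₀'²`,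
so the projection operator maps `(-1)ᵏ ∂ᵏ_τ𝛟|_Γ` to `(-1)ᵏ⁺¹ ∂ᵏ⁺¹_τ𝛟|_Γ`: the Taylor polynomial
is `𝛟_j`.
-/

open Matrix

/-- Matrix-vector multiplication acting on the Euclidean plane `ℝ²`. -/
noncomputable def mulVecE (M : Matrix (Fin 2) (Fin 2) ℝ)
    (v : EuclideanSpace ℝ (Fin 2)) : EuclideanSpace ℝ (Fin 2) :=
  WithLp.toLp 2 (M *ᵥ v)

/-- The time (`τ`) derivative of a function of `(σ, τ)` with values in `ℝ²`. -/
noncomputable def tauDeriv (w : ℝ × ℝ → EuclideanSpace ℝ (Fin 2)) :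
    ℝ × ℝ → EuclideanSpace ℝ (Fin 2) :=
  fun p => fderiv ℝ w p (0, 1)

/-- The data-projection operator `v ↦ [I + φ₀'(σ) A(σ)]⁻¹ [A(σ) d/dσ + B] v` for the
Carrier–Greenspan system, with `A σ = [[0, 1], [c σ, 0]]` and `B = [[0, 0], [1, 0]]`. -/
noncomputable def cgProjOp (c φ₀ : ℝ → ℝ) (v : ℝ → EuclideanSpace ℝ (Fin 2)) :
    ℝ → EuclideanSpace ℝ (Fin 2) :=
  fun σ => mulVecE ((1 + deriv φ₀ σ • (!![0, 1; c σ, 0] : Matrix (Fin 2) (Fin 2) ℝ))⁻¹)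
    (mulVecE (!![0, 1; c σ, 0] : Matrix (Fin 2) (Fin 2) ℝ) (deriv v σ)
      + mulVecE (!![0, 0; 1, 0] : Matrix (Fin 2) (Fin 2) ℝ) (v σ))

open Set
open scoped Nat

theorem ContinuousLinearMap.iteratedDeriv_comp_left {𝕜 E F : Type*} [NontriviallyNormedField 𝕜]
    [NormedAddCommGroup E] [NormedSpace 𝕜 E] [NormedAddCommGroup F] [NormedSpace 𝕜 F]
    {f : 𝕜 → E} {n : WithTop ℕ∞} {x : 𝕜} (g : E →L[𝕜] F) (hf : ContDiffAt 𝕜 n f x) {i : ℕ}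
    (hi : i ≤ n) :
    iteratedDeriv i (g ∘ f) x = g (iteratedDeriv i f x) := by
  simp [iteratedDeriv_eq_iteratedFDeriv, g.iteratedFDeriv_comp_left hf hi]

theorem taylor_mean_remainder_lagrange_of_contDiff {f : ℝ → ℝ} {x₀ x : ℝ} {n : ℕ} (hx : x₀ ≠ x)
    (hf : ContDiff ℝ (n + 1) f) :
    ∃ ξ ∈ uIoo x₀ x, f x - ∑ k ∈ Finset.range (n + 1), (x - x₀) ^ k / k ! * iteratedDeriv k f x₀ =
      iteratedDeriv (n + 1) f ξ * (x - x₀) ^ (n + 1) / (n + 1)! := by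
  obtain ⟨ξ, hξ, h⟩ := taylor_mean_remainder_lagrange_iteratedDeriv hx hf.contDiffOn
  refine ⟨ξ, hξ, ?_⟩
  rw [← h, taylor_within_apply]
  congr 1
  refine Finset.sum_congr rfl fun k hk => ?_
  rw [iteratedDerivWithin_eq_iteratedDeriv (uniqueDiffOn_uIcc hx) _ left_mem_uIcc, smul_eq_mul]
  · ring
  · exact hf.contDiffAt.of_le (by exact_mod_cast (Finset.mem_range.1 hk).le)

/-- The Lagrange form of the remainder fails for vector-valued `f`; it is applied to `g ∘ f` for a
norming functional `g` of the remainder. -/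
theorem norm_taylor_remainder_lt {E : Type*} [NormedAddCommGroup E] [NormedSpace ℝ E]
    {f : ℝ → E} {x₀ x ε : ℝ} {n : ℕ} (hf : ContDiff ℝ (n + 1) f)
    (hbound : ∀ t ∈ uIcc x₀ x, |x - x₀| ^ (n + 1) / (n + 1)! * ‖iteratedDeriv (n + 1) f t‖ < ε) :
    ‖f x - ∑ k ∈ Finset.range (n + 1), ((x - x₀) ^ k / k !) • iteratedDeriv k f x₀‖ < ε := by
  set R := f x - ∑ k ∈ Finset.range (n + 1), ((x - x₀) ^ k / k !) • iteratedDeriv k f x₀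
  rcases eq_or_ne x₀ x with rfl | hx
  · simpa [R, Finset.sum_range_succ'] using hbound x₀ left_mem_uIcc
  obtain ⟨g, hg, hgR⟩ := exists_dual_vector'' ℝ R
  simp only [RCLike.ofReal_real_eq_id, id_eq] at hgR
  have hgf : ContDiff ℝ (n + 1) (g ∘ f) := g.contDiff.comp hf
  have hcomp (k : ℕ) (hk : k ≤ n + 1) (t : ℝ) :
      iteratedDeriv k (g ∘ f) t = g (iteratedDeriv k f t) :=
    g.iteratedDeriv_comp_left hf.contDiffAt (by exact_mod_cast hk)
  obtain ⟨ξ, hξ, hlag⟩ := taylor_mean_remainder_lagrange_of_contDiff hx hgf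
  have hRg : ‖R‖ = g (iteratedDeriv (n + 1) f ξ) * (x - x₀) ^ (n + 1) / (n + 1)! := by
    rw [← hgR, ← hcomp _ le_rfl, ← hlag]
    simp only [R, map_sub, map_sum, map_smul, smul_eq_mul, Function.comp_apply]
    congr 1
    exact Finset.sum_congr rfl fun k hk => by rw [hcomp k (Finset.mem_range.1 hk).le]
  have hgD : |g (iteratedDeriv (n + 1) f ξ)| ≤ ‖iteratedDeriv (n + 1) f ξ‖ := by
    simpa using g.le_of_opNorm_le hg (iteratedDeriv (n + 1) f ξ)
  calc ‖R‖ ≤ |g (iteratedDeriv (n + 1) f ξ) * (x - x₀) ^ (n + 1) / (n + 1)!| :=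
        hRg.le.trans (le_abs_self _)
    _ ≤ |x - x₀| ^ (n + 1) / (n + 1)! * ‖iteratedDeriv (n + 1) f ξ‖ := by
        rw [abs_div, abs_mul, abs_pow, Nat.abs_cast, mul_comm, mul_div_right_comm]
        gcongr
    _ < ε := hbound ξ (uIoo_subset_uIcc_self hξ)

lemma mulVecE_eq_toEuclideanCLM (M : Matrix (Fin 2) (Fin 2) ℝ) :
    mulVecE M = Matrix.toEuclideanCLM (𝕜 := ℝ) M := rfl

lemma mulVecE_inv_mulVecE {M : Matrix (Fin 2) (Fin 2) ℝ} (hM : IsUnit M.det)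
    (v : EuclideanSpace ℝ (Fin 2)) : mulVecE M⁻¹ (mulVecE M v) = v := by
  simp only [mulVecE, WithLp.ofLp_toLp, mulVec_mulVec, nonsing_inv_mul M hM, one_mulVec]

lemma det_one_add_smul_offDiag (a b d : ℝ) :
    (1 + d • !![0, b; a, 0] : Matrix (Fin 2) (Fin 2) ℝ).det = 1 - a * b * d ^ 2 := by
  simp [det_fin_two]
  ring

lemma contDiff_tauDeriv {w : ℝ × ℝ → EuclideanSpace ℝ (Fin 2)} {n : WithTop ℕ∞}
    (hw : ContDiff ℝ (n + 1) w) : ContDiff ℝ n (tauDeriv w) :=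
  (hw.fderiv_right le_rfl).clm_apply contDiff_const

lemma contDiff_iterate_tauDeriv {w : ℝ × ℝ → EuclideanSpace ℝ (Fin 2)} {n : WithTop ℕ∞} {k : ℕ}
    (hw : ContDiff ℝ (n + k) w) : ContDiff ℝ n (tauDeriv^[k] w) := by
  induction k generalizing w with
  | zero => simpa using hw
  | succ k ih =>
    rw [Function.iterate_succ_apply]
    exact ih (contDiff_tauDeriv (by rwa [Nat.cast_succ, ← add_assoc] at hw))

lemma hasDerivAt_tauDeriv {w : ℝ × ℝ → EuclideanSpace ℝ (Fin 2)} {σ τ : ℝ}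
    (hw : DifferentiableAt ℝ w (σ, τ)) :
    HasDerivAt (fun t => w (σ, t)) (tauDeriv w (σ, τ)) τ :=
  hw.hasFDerivAt.comp_hasDerivAt τ ((hasDerivAt_const τ σ).prodMk (hasDerivAt_id τ))

lemma iteratedDeriv_eq_iterate_tauDeriv {w : ℝ × ℝ → EuclideanSpace ℝ (Fin 2)} {k : ℕ}
    (hw : ContDiff ℝ k w) (σ τ : ℝ) :
    iteratedDeriv k (fun t => w (σ, t)) τ = (tauDeriv^[k] w) (σ, τ) := by
  induction k generalizing w τ with
  | zero => simp
  | succ k ih =>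
    have hderiv : deriv (fun t => w (σ, t)) = fun t => tauDeriv w (σ, t) :=
      funext fun t => (hasDerivAt_tauDeriv (hw.differentiable (by simp) _)).deriv
    rw [iteratedDeriv_succ', hderiv, ih (contDiff_tauDeriv (by exact_mod_cast hw)),
      ← Function.iterate_succ_apply]

lemma fderiv_fderiv_apply_const {E F : Type*} [NormedAddCommGroup E] [NormedSpace ℝ E]
    [NormedAddCommGroup F] [NormedSpace ℝ F] {w : E → F} {p : E}
    (hw : DifferentiableAt ℝ (fderiv ℝ w) p) (u v : E) :
    fderiv ℝ (fun q => fderiv ℝ w q v) p u = fderiv ℝ (fderiv ℝ w) p u v := by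
  simp [fderiv_clm_apply hw (differentiableAt_const v)]

lemma HasDerivAt.mulVecE {f : ℝ → EuclideanSpace ℝ (Fin 2)} {f' : EuclideanSpace ℝ (Fin 2)} {t : ℝ}
    (M : Matrix (Fin 2) (Fin 2) ℝ) (hf : HasDerivAt f f' t) :
    HasDerivAt (fun t => mulVecE M (f t)) (mulVecE M f') t :=
  (Matrix.toEuclideanCLM (𝕜 := ℝ) M).hasFDerivAt.comp_hasDerivAt t hf

def IsCarrierGreenspanSolution (c : ℝ → ℝ) (w : ℝ × ℝ → EuclideanSpace ℝ (Fin 2)) : Prop :=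
  ∀ σ τ : ℝ,
    fderiv ℝ w (σ, τ) (0, 1)
      + mulVecE (!![0, 1; c σ, 0] : Matrix (Fin 2) (Fin 2) ℝ) (fderiv ℝ w (σ, τ) (1, 0))
      + mulVecE (!![0, 0; 1, 0] : Matrix (Fin 2) (Fin 2) ℝ) (w (σ, τ)) = 0

namespace IsCarrierGreenspanSolution

variable {c : ℝ → ℝ} {w : ℝ × ℝ → EuclideanSpace ℝ (Fin 2)}

lemma tauDeriv_eq (h : IsCarrierGreenspanSolution c w) (σ τ : ℝ) :
    tauDeriv w (σ, τ) = -(mulVecE !![0, 1; c σ, 0] (fderiv ℝ w (σ, τ) (1, 0))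
      + mulVecE !![0, 0; 1, 0] (w (σ, τ))) :=
  eq_neg_of_add_eq_zero_left (by rw [← add_assoc]; exact h σ τ)

lemma tauDeriv (hw : ContDiff ℝ 2 w) (h : IsCarrierGreenspanSolution c w) :
    IsCarrierGreenspanSolution c (tauDeriv w) := by
  intro σ τ
  have hw1 : Differentiable ℝ w := hw.differentiable (by simp)
  have hw2 : Differentiable ℝ (fderiv ℝ w) :=
    (hw.fderiv_right (m := 1) (by norm_num)).differentiable one_ne_zero
  set H := fderiv ℝ (fderiv ℝ w) (σ, τ)
  have hsymm : H (1, 0) (0, 1) = H (0, 1) (1, 0) :=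
    hw.contDiffAt.isSymmSndFDerivAt (by simp) _ _
  have hV (u : ℝ × ℝ) : fderiv ℝ (_root_.tauDeriv w) (σ, τ) u = H u (0, 1) :=
    fderiv_fderiv_apply_const (hw2 _) u (0, 1)
  have hlhs : HasDerivAt (fun t => _root_.tauDeriv w (σ, t)) (H (0, 1) (0, 1)) τ := by
    convert hasDerivAt_tauDeriv ((contDiff_tauDeriv (n := 1) hw).differentiable one_ne_zero _)
    exact (hV (0, 1)).symm
  have hσ : HasDerivAt (fun t => fderiv ℝ w (σ, t) (1, 0)) (H (0, 1) (1, 0)) τ := by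
    convert hasDerivAt_tauDeriv (w := fun q => fderiv ℝ w q (1, 0))
      ((hw2 _).clm_apply (differentiableAt_const ((1, 0) : ℝ × ℝ)))
    exact (fderiv_fderiv_apply_const (hw2 _) _ _).symm
  have hrhs : HasDerivAt (fun t => _root_.tauDeriv w (σ, t))
      (-(mulVecE !![0, 1; c σ, 0] (H (0, 1) (1, 0))
        + mulVecE !![0, 0; 1, 0] (_root_.tauDeriv w (σ, τ)))) τ := by
    rw [funext (h.tauDeriv_eq σ)]
    exact ((hσ.mulVecE _).add ((hasDerivAt_tauDeriv (hw1 _)).mulVecE _)).neg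
  rw [hV, hV, hsymm, hlhs.unique hrhs]
  abel

lemma iterate_tauDeriv {k : ℕ} (hw : ContDiff ℝ (k + 1) w) (h : IsCarrierGreenspanSolution c w) :
    IsCarrierGreenspanSolution c (_root_.tauDeriv^[k] w) := by
  induction k generalizing w with
  | zero => exact h
  | succ k ih =>
    rw [Function.iterate_succ_apply]
    exact ih (contDiff_tauDeriv (by exact_mod_cast hw))
      (h.tauDeriv (hw.of_le (by exact_mod_cast (by omega : 2 ≤ k + 1 + 1))))

end IsCarrierGreenspanSolution

section cgProjOp

variable {c φ₀ : ℝ → ℝ}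

lemma cgProjOp_smul (r : ℝ) (v : ℝ → EuclideanSpace ℝ (Fin 2)) :
    cgProjOp c φ₀ (r • v) = r • cgProjOp c φ₀ v := by
  funext σ
  simp only [cgProjOp, deriv_const_smul_field, Pi.smul_apply, mulVecE_eq_toEuclideanCLM, map_smul,
    ← smul_add]

lemma cgProjOp_slice (hnonchar : ∀ σ : ℝ, c σ * (deriv φ₀ σ) ^ 2 ≠ 1)
    (hφ₀ : Differentiable ℝ φ₀) {W : ℝ × ℝ → EuclideanSpace ℝ (Fin 2)}
    (hW : Differentiable ℝ W) (hsol : IsCarrierGreenspanSolution c W) :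
    cgProjOp c φ₀ (fun σ => W (σ, -φ₀ σ)) = fun σ => -tauDeriv W (σ, -φ₀ σ) := by
  funext σ
  set d := deriv φ₀ σ
  set p : ℝ × ℝ := (σ, -φ₀ σ)
  have hdet : IsUnit (1 + d • !![0, 1; c σ, 0] : Matrix (Fin 2) (Fin 2) ℝ).det := by
    rw [det_one_add_smul_offDiag, mul_one, isUnit_iff_ne_zero, sub_ne_zero]
    exact (hnonchar σ).symm
  have hcurve : deriv (fun σ => W (σ, -φ₀ σ)) σ = fderiv ℝ W p (1, 0) - d • tauDeriv W p := by
    have : HasDerivAt (fun σ => W (σ, -φ₀ σ)) (fderiv ℝ W p (1, -d)) σ :=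
      (hW p).hasFDerivAt.comp_hasDerivAt σ ((hasDerivAt_id σ).prodMk (hφ₀ σ).hasDerivAt.neg)
    rw [this.deriv, tauDeriv, ← map_smul, ← map_sub]
    congr 1
    simp
  have hA : mulVecE !![0, 1; c σ, 0] (fderiv ℝ W p (1, 0)) + mulVecE !![0, 0; 1, 0] (W p)
      = -tauDeriv W p := by
    rw [hsol.tauDeriv_eq σ (-φ₀ σ), neg_neg]
  have hinner : mulVecE !![0, 1; c σ, 0] (deriv (fun σ => W (σ, -φ₀ σ)) σ)
      + mulVecE !![0, 0; 1, 0] (W p) = mulVecE (1 + d • !![0, 1; c σ, 0]) (-tauDeriv W p) := by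
    simp only [hcurve, mulVecE_eq_toEuclideanCLM, map_add, map_one, map_smul, map_sub, map_neg,
      _root_.add_apply, one_apply_eq_self, _root_.smul_apply] at hA ⊢
    linear_combination (norm := module) hA
  rw [cgProjOp, hinner, mulVecE_inv_mulVecE hdet]

lemma cgProjOp_iterate_slice (hnonchar : ∀ σ : ℝ, c σ * (deriv φ₀ σ) ^ 2 ≠ 1)
    (hφ₀ : Differentiable ℝ φ₀) {Φ : ℝ × ℝ → EuclideanSpace ℝ (Fin 2)} {k : ℕ}
    (hΦ : ContDiff ℝ k Φ) (hsol : IsCarrierGreenspanSolution c Φ) :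
    (cgProjOp c φ₀)^[k] (fun σ => Φ (σ, -φ₀ σ))
      = (-1 : ℝ) ^ k • fun σ => (tauDeriv^[k] Φ) (σ, -φ₀ σ) := by
  induction k with
  | zero => simp
  | succ k ih =>
    have hΦ' : ContDiff ℝ (k + 1) Φ := by exact_mod_cast hΦ
    rw [Function.iterate_succ_apply', ih (hΦ'.of_le (by simp)), cgProjOp_smul,
      cgProjOp_slice hnonchar hφ₀ _ (hsol.iterate_tauDeriv hΦ'), Function.iterate_succ_apply' _ k]
    · funext σ
      simp [pow_succ]
    · exact (contDiff_iterate_tauDeriv (n := 1) (by rwa [add_comm])).differentiable one_ne_zero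

lemma sum_taylor_slice_eq_add_sum_cgProjOp_iterate
    (hnonchar : ∀ σ : ℝ, c σ * (deriv φ₀ σ) ^ 2 ≠ 1) (hφ₀ : Differentiable ℝ φ₀)
    {Φ : ℝ × ℝ → EuclideanSpace ℝ (Fin 2)} {j : ℕ} (hΦ : ContDiff ℝ j Φ)
    (hsol : IsCarrierGreenspanSolution c Φ) (σ : ℝ) :
    ∑ k ∈ Finset.range (j + 1), ((0 - -φ₀ σ) ^ k / k !) •
        iteratedDeriv k (fun t => Φ (σ, t)) (-φ₀ σ)
      = Φ (σ, -φ₀ σ) + ∑ k ∈ Finset.Icc 1 j,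
        ((-φ₀ σ) ^ k / k !) • ((cgProjOp c φ₀)^[k] fun σ => Φ (σ, -φ₀ σ)) σ := by
  have hterm : ∀ k ∈ Finset.range (j + 1), ((0 - -φ₀ σ) ^ k / k !) •
      iteratedDeriv k (fun t => Φ (σ, t)) (-φ₀ σ)
        = ((-φ₀ σ) ^ k / k !) • ((cgProjOp c φ₀)^[k] fun σ => Φ (σ, -φ₀ σ)) σ := fun k hk => by
    have hΦk : ContDiff ℝ k Φ := hΦ.of_le (by exact_mod_cast Finset.mem_range_succ_iff.1 hk)
    rw [iteratedDeriv_eq_iterate_tauDeriv hΦk, cgProjOp_iterate_slice hnonchar hφ₀ hΦk hsol,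
      Pi.smul_apply, smul_smul, zero_sub, neg_neg, div_mul_eq_mul_div, ← mul_pow, neg_mul_neg,
      mul_one]
  rw [Finset.sum_congr rfl hterm, Finset.range_eq_Ico, Finset.sum_eq_sum_Ico_succ_bot j.succ_pos,
    zero_add, Nat.succ_eq_add_one, Finset.Ico_add_one_right_eq_Icc]
  simp

end cgProjOp

theorem data_projection_shallow_water_general
    (j : ℕ) (c : ℝ → ℝ)
    (Φ : ℝ × ℝ → EuclideanSpace ℝ (Fin 2))
    (hΦ : ContDiff ℝ ((j : ℕ∞) + 1) Φ)
    (hsol : ∀ σ τ : ℝ,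
      fderiv ℝ Φ (σ, τ) (0, 1)
        + mulVecE (!![0, 1; c σ, 0] : Matrix (Fin 2) (Fin 2) ℝ) (fderiv ℝ Φ (σ, τ) (1, 0))
        + mulVecE (!![0, 0; 1, 0] : Matrix (Fin 2) (Fin 2) ℝ) (Φ (σ, τ)) = 0)
    (φ₀ : ℝ → ℝ) (hφ₀ : ContDiff ℝ ((j : ℕ∞) + 1) φ₀)
    (hnonchar : ∀ σ : ℝ, c σ * (deriv φ₀ σ) ^ 2 ≠ 1)
    (Φ₀ : ℝ → EuclideanSpace ℝ (Fin 2)) (hΦ₀ : ∀ σ : ℝ, Φ₀ σ = Φ (σ, -φ₀ σ))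
    (ε : ℝ)
    (hbound : ∀ σ : ℝ, ∀ s ∈ Set.uIcc (0 : ℝ) (-φ₀ σ),
      (|φ₀ σ| ^ (j + 1) / (Nat.factorial (j + 1) : ℝ)) *
          ‖(tauDeriv^[j + 1] Φ) (σ, s)‖ < ε) :
    ∀ σ : ℝ,
      ‖Φ (σ, 0) - (Φ₀ σ + ∑ k ∈ Finset.Icc 1 j,
          ((-φ₀ σ) ^ k / (Nat.factorial k : ℝ)) • ((cgProjOp c φ₀)^[k] Φ₀) σ)‖ < ε := by
  have hΦ' : ContDiff ℝ (j + 1) Φ := by exact_mod_cast hΦ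
  obtain rfl : Φ₀ = fun σ => Φ (σ, -φ₀ σ) := funext hΦ₀
  intro σ
  rw [← sum_taylor_slice_eq_add_sum_cgProjOp_iterate hnonchar (hφ₀.differentiable (by simp))
    (hΦ'.of_le (by simp)) hsol σ]
  refine norm_taylor_remainder_lt (f := fun t => Φ (σ, t))
    (hΦ'.comp (contDiff_const.prodMk contDiff_id)) fun t ht => ?_
  rw [iteratedDeriv_eq_iterate_tauDeriv (by exact_mod_cast hΦ')]
  simpa using hbound σ t (by rwa [uIcc_comm] at ht)

/-- **data projection for the shallow water system.**
Let `𝛟 = (φ, ψ)ᵀ` be a `C^{j+1}` solution of the Carrier–Greenspan system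
`𝛟_τ + A(σ) 𝛟_σ + B 𝛟 = 0` with `A σ = [[0, 1], [c σ, 0]]`, `B = [[0, 0], [1, 0]]`.
Let `φ₀` be `C^{j+1}` with `c σ ⬝ φ₀'(σ)² ≠ 1` for all `σ` (non-breaking condition),
let `𝛟₀ σ = 𝛟 (σ, -φ₀ σ)` (whose first component is `φ₀ σ`), and define
`𝛟_j σ = 𝛟₀ σ + ∑_{k=1}^{j} ((-φ₀ σ)^k/k!) ({[I + φ₀' A]⁻¹ [A d/dσ + B]}^k 𝛟₀) σ`.
If `ε > 0` and `(|φ₀ σ|^{j+1}/(j+1)!) ‖∂^{j+1}𝛟/∂τ^{j+1}(σ, s)‖ < ε` for all `σ` and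
all `s` between `0` and `-φ₀ σ`, then `‖𝛟 (σ, 0) - 𝛟_j σ‖ < ε` for every `σ`. -/
theorem data_projection_shallow_water
    (j : ℕ) (c : ℝ → ℝ) (hc : ContDiff ℝ ((j : ℕ∞) + 1) c)
    (Φ : ℝ × ℝ → EuclideanSpace ℝ (Fin 2))
    (hΦ : ContDiff ℝ ((j : ℕ∞) + 1) Φ)
    (hsol : ∀ σ τ : ℝ,
      fderiv ℝ Φ (σ, τ) (0, 1)
        + mulVecE (!![0, 1; c σ, 0] : Matrix (Fin 2) (Fin 2) ℝ) (fderiv ℝ Φ (σ, τ) (1, 0))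
        + mulVecE (!![0, 0; 1, 0] : Matrix (Fin 2) (Fin 2) ℝ) (Φ (σ, τ)) = 0)
    (φ₀ : ℝ → ℝ) (hφ₀ : ContDiff ℝ ((j : ℕ∞) + 1) φ₀)
    (hnonchar : ∀ σ : ℝ, c σ * (deriv φ₀ σ) ^ 2 ≠ 1)
    (Φ₀ : ℝ → EuclideanSpace ℝ (Fin 2)) (hΦ₀ : ∀ σ : ℝ, Φ₀ σ = Φ (σ, -φ₀ σ))
    (hfirst : ∀ σ : ℝ, Φ₀ σ 0 = φ₀ σ)
    (ε : ℝ) (hε : 0 < ε)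
    (hbound : ∀ σ : ℝ, ∀ s ∈ Set.uIcc (0 : ℝ) (-φ₀ σ),
      (|φ₀ σ| ^ (j + 1) / (Nat.factorial (j + 1) : ℝ)) *
          ‖(tauDeriv^[j + 1] Φ) (σ, s)‖ < ε) :
    ∀ σ : ℝ,
      ‖Φ (σ, 0) - (Φ₀ σ + ∑ k ∈ Finset.Icc 1 j,
          ((-φ₀ σ) ^ k / (Nat.factorial k : ℝ)) • ((cgProjOp c φ₀)^[k] Φ₀) σ)‖ < ε :=
  data_projection_shallow_water_general j c Φ hΦ hsol φ₀ hφ₀ hnonchar Φ₀ hΦ₀ ε hbound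
end
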